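/- arXiv:0801.0822 — 2 statements merged into one kernel-verified Lean document; each statement's English description precedes it below -/
import Mathlib

section
/- Let n ≥ 2 and let A_n denote the alternating group of even permutations of Fin n. Let λ, μ : Fin n → ℤ be strictly decreasing integer vectors (λ 0 > λ 1 > ⋯ > λ (n−1) and likewise for μ). Then ∫_{[0,1]^n} Ê_λ(x) · conj(Ê_μ(x)) dx = (n!/2) if λ = μ and 0 otherwise, where the integral is with respect to Lebesgue measure on the unit cube; that is, E-orbit functions attached to distinct strictly dominant integral weights are orthogonal, with squared norm equal to the order n!/2 of the even Weyl group. -/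
/-!
Expanding both orbit sums, the integral becomes a double sum over `σ, τ ∈ Aₙ` of integrals of
`exp(2πi ⟨λ ∘ σ⁻¹ - μ ∘ τ⁻¹, x⟩)` over the unit cube, each of which is `1` or `0` according to
whether the integral frequency vanishes. Two strictly decreasing vectors with the same set of
values are equal, so `λ ∘ σ⁻¹ = μ ∘ τ⁻¹` forces `λ = μ` and then `σ = τ`: only the `n!/2`
diagonal terms survive.
-/

/-- The normalized `E`-orbit function
`Ê_λ(x) = ∑_{σ ∈ Aₙ} exp(2πi ∑ᵢ λ(σ⁻¹ i) · x i)`. -/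
noncomputable def Ehat (n : ℕ) (lam x : Fin n → ℝ) : ℂ :=
  ∑ σ : alternatingGroup (Fin n),
    Complex.exp (2 * (Real.pi : ℂ) * Complex.I *
      ((∑ i, lam ((σ : Equiv.Perm (Fin n))⁻¹ i) * x i : ℝ) : ℂ))

open MeasureTheory Complex Real ComplexConjugate

theorem integral_Icc_exp_two_pi_I_int_mul (k : ℤ) :
    ∫ t in Set.Icc (0 : ℝ) 1, Complex.exp (2 * π * I * k * t) = if k = 0 then 1 else 0 := by
  split_ifs with hk
  · simp [hk]
  · have hc : 2 * π * I * k ≠ 0 := by simp [hk, Real.pi_ne_zero, I_ne_zero]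
    rw [integral_Icc_eq_integral_Ioc, ← intervalIntegral.integral_of_le zero_le_one,
      integral_exp_mul_complex hc, ofReal_one, mul_one, ofReal_zero, mul_zero, Complex.exp_zero,
      show 2 * π * I * k = k * (2 * π * I) by ring, exp_int_mul_two_pi_mul_I, sub_self, zero_div]

section TorusChar

variable {ι : Type*} [Fintype ι]

noncomputable def torusChar (k x : ι → ℝ) : ℂ :=
  Complex.exp (2 * π * I * ((∑ i, k i * x i : ℝ) : ℂ))

theorem torusChar_eq_prod (k x : ι → ℝ) :
    torusChar k x = ∏ i, Complex.exp (2 * π * I * k i * x i) := by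
  rw [torusChar, ← Complex.exp_sum, ofReal_sum, Finset.mul_sum]
  simp_rw [ofReal_mul, mul_assoc]

theorem torusChar_mul_conj (k l x : ι → ℝ) :
    torusChar k x * conj (torusChar l x) = torusChar (k - l) x := by
  simp only [torusChar, ← Complex.exp_conj, ← Complex.exp_add, map_mul, conj_ofReal, conj_I,
    map_ofNat, Pi.sub_apply, sub_mul, Finset.sum_sub_distrib, ofReal_sub]
  ring_nf

theorem integrableOn_unitCube_torusChar_mul_conj (k l : ι → ℝ) :
    IntegrableOn (fun x => torusChar k x * conj (torusChar l x))
      (Set.univ.pi fun _ : ι => Set.Icc (0 : ℝ) 1) := by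
  refine ContinuousOn.integrableOn_compact (isCompact_univ_pi fun _ => isCompact_Icc) ?_
  unfold torusChar
  fun_prop

theorem integral_unitCube_torusChar_intCast (k : ι → ℤ) :
    ∫ x in Set.univ.pi (fun _ : ι => Set.Icc (0 : ℝ) 1), torusChar (fun i => (k i : ℝ)) x =
      if k = 0 then 1 else 0 := by
  simp_rw [torusChar_eq_prod, volume_pi, Measure.restrict_pi_pi]
  rw [integral_fintype_prod_eq_prod fun i (t : ℝ) => Complex.exp (2 * π * I * (k i : ℝ) * t)]
  simp_rw [ofReal_intCast, integral_Icc_exp_two_pi_I_int_mul, Finset.prod_ite_zero,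
    Finset.prod_const_one, Finset.mem_univ, true_implies, funext_iff, Pi.zero_apply]

theorem integral_unitCube_torusChar_mul_conj (k l : ι → ℤ) :
    ∫ x in Set.univ.pi (fun _ : ι => Set.Icc (0 : ℝ) 1),
        torusChar (fun i => (k i : ℝ)) x * conj (torusChar (fun i => (l i : ℝ)) x) =
      if k = l then 1 else 0 := by
  have h := integral_unitCube_torusChar_intCast (k - l)
  simp only [sub_eq_zero, Pi.sub_apply, Int.cast_sub] at h
  simpa only [torusChar_mul_conj, Pi.sub_def] using h

theorem integral_unitCube_sum_torusChar_mul_conj_sum {S T : Type*} [Fintype S] [Fintype T]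
    (k : S → ι → ℤ) (l : T → ι → ℤ) :
    ∫ x in Set.univ.pi (fun _ : ι => Set.Icc (0 : ℝ) 1),
        (∑ s, torusChar (fun i => (k s i : ℝ)) x) *
          conj (∑ t, torusChar (fun i => (l t i : ℝ)) x) =
      ∑ s, ∑ t, if k s = l t then 1 else 0 := by
  simp_rw [map_sum, Finset.sum_mul_sum]
  rw [integral_finsetSum _ fun s _ => integrable_finsetSum _ fun t _ =>
    integrableOn_unitCube_torusChar_mul_conj _ _]
  simp_rw [integral_finsetSum _ fun t _ => integrableOn_unitCube_torusChar_mul_conj _ _,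
    integral_unitCube_torusChar_mul_conj]

end TorusChar

theorem StrictAnti.eq_and_eq_of_comp_perm_inv {ι α : Type*} [LinearOrder ι] [WellFoundedGT ι]
    [Preorder α] {f g : ι → α} (hf : StrictAnti f) (hg : StrictAnti g) {σ τ : Equiv.Perm ι}
    (h : f ∘ ⇑σ⁻¹ = g ∘ ⇑τ⁻¹) : f = g ∧ σ = τ := by
  have hfg : f = g := by
    rw [← hf.range_inj hg, ← (σ⁻¹).surjective.range_comp, h, (τ⁻¹).surjective.range_comp]
  subst hfg
  exact ⟨rfl, inv_injective (Equiv.ext fun i => hf.injective (congrFun h i))⟩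

theorem natCast_card_alternatingGroup_fin {n : ℕ} (hn : 2 ≤ n) :
    (Fintype.card (alternatingGroup (Fin n)) : ℂ) = n.factorial / 2 := by
  have : Nontrivial (Fin n) := Fin.nontrivial_iff_two_le.mpr hn
  rw [eq_div_iff two_ne_zero, mul_comm]
  exact_mod_cast (two_mul_card_alternatingGroup (α := Fin n)).trans
    (by rw [Fintype.card_perm, Fintype.card_fin])

/-- `E`-orbit functions attached to distinct strictly dominant integral weights are
orthogonal over the unit cube, with squared norm the order `n!/2` of the even Weyl
group. -/
theorem Ehat_orthogonality_strict (n : ℕ) (hn : 2 ≤ n) (lam mu : Fin n → ℤ)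
    (hlam : ∀ i j : Fin n, i < j → lam j < lam i)
    (hmu : ∀ i j : Fin n, i < j → mu j < mu i) :
    ∫ x in Set.univ.pi (fun _ : Fin n => Set.Icc (0 : ℝ) 1),
        Ehat n (fun i => (lam i : ℝ)) x *
          (starRingEnd ℂ) (Ehat n (fun i => (mu i : ℝ)) x) =
      if lam = mu then (n.factorial : ℂ) / 2 else 0 := by
  have h_coincide : ∀ σ τ : alternatingGroup (Fin n),
      lam ∘ ⇑(σ : Equiv.Perm (Fin n))⁻¹ = mu ∘ ⇑(τ : Equiv.Perm (Fin n))⁻¹ ↔ lam = mu ∧ σ = τ :=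
    fun σ τ => ⟨fun h => (StrictAnti.eq_and_eq_of_comp_perm_inv hlam hmu h).imp_right Subtype.ext,
      by rintro ⟨rfl, rfl⟩; rfl⟩
  -- `Ehat` unfolds definitionally to an orbit sum of `torusChar`s.
  calc _ = ∑ σ : alternatingGroup (Fin n), ∑ τ : alternatingGroup (Fin n),
        if lam ∘ ⇑(σ : Equiv.Perm (Fin n))⁻¹ = mu ∘ ⇑(τ : Equiv.Perm (Fin n))⁻¹ then 1 else 0 :=
      integral_unitCube_sum_torusChar_mul_conj_sum
        (fun σ : alternatingGroup (Fin n) => lam ∘ ⇑(σ : Equiv.Perm (Fin n))⁻¹)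
        (fun τ : alternatingGroup (Fin n) => mu ∘ ⇑(τ : Equiv.Perm (Fin n))⁻¹)
    _ = if lam = mu then (Fintype.card (alternatingGroup (Fin n)) : ℂ) else 0 := by
      simp_rw [h_coincide]
      split_ifs with hlm <;> simp [hlm]
    _ = _ := by rw [natCast_card_alternatingGroup_fin hn]
end

section
/- Let n ≥ 1 and let A_n denote the alternating group of even permutations of Fin n. For every λ : Fin n → ℝ and every m : Fin n → ℕ, ∫_{x : Fin n → ℝ} Ê_λ(x) · exp(−π ∑_i (x i)²) · ∏_i He_{m i}(2√π · x i) dx = i^{∑_i m i} · exp(−π ∑_i (λ i)²) · ∑_{σ ∈ A_n} ∏_i He_{m (σ i)}(2√π · λ i), where the integral is over ℝ^n with Lebesgue measure. That is, applying the E-orbit function transform to a product of Hermite functions produces the A_n-symmetrized Hermite polynomial ℋ_m times the Gaussian, with eigenvalue factor i^{|m|}. -/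
open MeasureTheory Polynomial Complex Real FourierTransform

namespace Polynomial

theorem hermite_comp_neg_X (k : ℕ) : (hermite k).comp (-X) = (-1) ^ k * hermite k := by
  induction k with
  | zero => simp
  | succ k ih =>
    have hderiv : (derivative (hermite k)).comp (-X) = -(-1) ^ k * derivative (hermite k) := by
      have := congrArg derivative ih
      rw [show ((-1 : ℤ[X]) ^ k) = C ((-1) ^ k) by simp, derivative_C_mul, derivative_comp,
        derivative_neg, derivative_X] at this
      simp only [C_pow, C_neg, C_1] at this
      linear_combination -this
    rw [hermite_succ, sub_comp, mul_comp, X_comp, ih, hderiv]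
    ring

theorem aeval_neg_hermite {A : Type*} [CommRing A] (k : ℕ) (y : A) :
    aeval (-y) (hermite k) = (-1) ^ k * aeval y (hermite k) := by
  simpa [aeval_comp] using congrArg (aeval y) (hermite_comp_neg_X k)

end Polynomial

theorem integrable_eval_mul_exp_neg_mul_sq {b : ℝ} (hb : 0 < b) (p : ℝ[X]) :
    Integrable fun x : ℝ => p.eval x * Real.exp (-b * x ^ 2) := by
  simp_rw [eval_eq_sum_range, Finset.sum_mul, mul_assoc]
  refine integrable_finsetSum _ fun i _ => Integrable.const_mul ?_ _
  simpa using integrable_rpow_mul_exp_neg_mul_sq hb (s := i) (by linarith [i.cast_nonneg (α := ℝ)])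

noncomputable def hermiteFun (k : ℕ) (x : ℝ) : ℝ :=
  aeval (2 * √π * x) (hermite k) * Real.exp (-π * x ^ 2)

theorem hermiteFun_neg (k : ℕ) (x : ℝ) : hermiteFun k (-x) = (-1) ^ k * hermiteFun k x := by
  simp only [hermiteFun, mul_neg, aeval_neg_hermite, neg_sq]
  ring

theorem hasDerivAt_hermiteFun (k : ℕ) (x : ℝ) :
    HasDerivAt (hermiteFun k)
      (2 * π * x * hermiteFun k x - 2 * √π * hermiteFun (k + 1) x) x := by
  have hpoly := ((hermite k).hasDerivAt_aeval (2 * √π * x)).comp x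
    ((hasDerivAt_id x).const_mul (2 * √π))
  have hexp := ((hasDerivAt_pow 2 x).const_mul (-π)).exp
  refine (hpoly.mul hexp).congr_deriv ?_
  have hsq : √π ^ 2 = π := Real.sq_sqrt pi_pos.le
  simp only [hermiteFun, hermite_succ, map_sub, map_mul, aeval_X, Function.comp_apply]
  linear_combination 4 * x * aeval (2 * √π * x) (hermite k) * Real.exp (-π * x ^ 2) * hsq

theorem integrable_pow_mul_hermiteFun (j k : ℕ) :
    Integrable fun x : ℝ => x ^ j * hermiteFun k x := by
  convert integrable_eval_mul_exp_neg_mul_sq pi_pos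
    (X ^ j * ((hermite k).map (algebraMap ℤ ℝ)).comp (C (2 * √π) * X)) using 2 with x
  simp only [hermiteFun, eval_mul, eval_pow, eval_X, eval_comp, eval_C, eval_map_algebraMap]
  ring

namespace Real

variable {V E : Type*} [NormedAddCommGroup V] [InnerProductSpace ℝ V] [FiniteDimensional ℝ V]
  [MeasurableSpace V] [BorelSpace V] [NormedAddCommGroup E] [NormedSpace ℂ E]

theorem fourier_sub {f g : V → E} (hf : Integrable f) (hg : Integrable g) :
    𝓕 (f - g) = 𝓕 f - 𝓕 g := by
  ext w
  simp only [fourier_eq, Pi.sub_apply, smul_sub]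
  exact integral_sub ((fourierIntegral_convergent_iff w).2 hf)
    ((fourierIntegral_convergent_iff w).2 hg)

theorem fourier_const_smul (c : ℂ) (f : V → E) : 𝓕 (c • f) = c • 𝓕 f :=
  VectorFourier.fourierIntegral_const_smul _ _ _ _ _

end Real

theorem integrable_ofReal_pow_mul_hermiteFun (j k : ℕ) :
    Integrable fun x : ℝ => (x : ℂ) ^ j * hermiteFun k x := by
  simpa using (integrable_pow_mul_hermiteFun j k).ofReal (𝕜 := ℂ)

theorem hasDerivAt_ofReal_hermiteFun (k : ℕ) (x : ℝ) :
    HasDerivAt (fun x => (hermiteFun k x : ℂ))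
      (2 * π * x * hermiteFun k x - 2 * √π * hermiteFun (k + 1) x) x := by
  simpa using (hasDerivAt_hermiteFun k x).ofReal_comp

theorem fourier_hermiteFun_succ (k : ℕ) (w : ℝ) :
    2 * √π * 𝓕 (fun x : ℝ => (hermiteFun (k + 1) x : ℂ)) w =
      I * deriv (𝓕 fun x : ℝ => (hermiteFun k x : ℂ)) w -
        2 * π * I * w * 𝓕 (fun x : ℝ => (hermiteFun k x : ℂ)) w := by
  have hg : Integrable fun x : ℝ => (hermiteFun k x : ℂ) := by
    simpa using integrable_ofReal_pow_mul_hermiteFun 0 k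
  have hxg : Integrable fun x : ℝ => (x : ℂ) * hermiteFun k x := by
    simpa using integrable_ofReal_pow_mul_hermiteFun 1 k
  have hderiv : deriv (fun x => (hermiteFun k x : ℂ)) =
      fun x : ℝ => (2 * π * x * hermiteFun k x - 2 * √π * hermiteFun (k + 1) x : ℂ) :=
    funext fun x => (hasDerivAt_ofReal_hermiteFun k x).deriv
  -- the lowering relation `He_{k+1}(y) = y He_k(y) - He_k'(y)`, in terms of `hermiteFun`
  have hladder : ((2 * √π : ℂ) • fun x : ℝ => (hermiteFun (k + 1) x : ℂ)) =
      I • (fun x : ℝ => (-2 * π * I * x) • (hermiteFun k x : ℂ)) -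
        deriv (fun x => (hermiteFun k x : ℂ)) := by
    ext x
    simp only [hderiv, Pi.smul_apply, Pi.sub_apply, smul_eq_mul]
    linear_combination (2 * π * x * hermiteFun k x : ℂ) * I_sq
  have hderiv_int : Integrable (deriv fun x => (hermiteFun k x : ℂ)) := by
    rw [hderiv]
    convert (hxg.const_mul (2 * π)).sub
      ((integrable_ofReal_pow_mul_hermiteFun 0 (k + 1)).const_mul (2 * √π)) using 2 with x
    simp only [Pi.sub_apply, pow_zero, one_mul]
    ring
  have hFderiv := Real.fourier_deriv hg
    (fun x => (hasDerivAt_ofReal_hermiteFun k x).differentiableAt) hderiv_int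
  have hFxg := Real.deriv_fourier hg (by simpa [Complex.real_smul] using hxg)
  rw [← smul_eq_mul, ← Pi.smul_apply, ← Real.fourier_const_smul, hladder,
    Real.fourier_sub _ hderiv_int, Real.fourier_const_smul, ← hFxg, hFderiv]
  · rfl
  · convert (hxg.const_mul (-2 * π * I)).const_mul I using 2 with x
    simp only [Pi.smul_apply, smul_eq_mul]
    ring

theorem fourier_hermiteFun (k : ℕ) :
    𝓕 (fun x : ℝ => (hermiteFun k x : ℂ)) = fun w => (-I) ^ k * hermiteFun k w := by
  induction k with
  | zero =>
    have hgauss : (fun x : ℝ => (hermiteFun 0 x : ℂ)) = fun x : ℝ => cexp (-π * 1 * x ^ 2) := by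
      ext x; simp [hermiteFun]
    rw [hgauss, fourier_gaussian_pi (by simp)]
    ext w; simp [hermiteFun]
  | succ k ih =>
    have hc : (2 * √π : ℂ) ≠ 0 := mod_cast (mul_pos two_pos (sqrt_pos.2 pi_pos)).ne'
    ext w
    apply mul_left_cancel₀ hc
    rw [fourier_hermiteFun_succ, ih, ((hasDerivAt_ofReal_hermiteFun k w).const_mul _).deriv]
    ring

theorem integrable_cexp_mul_hermiteFun (k : ℕ) (a : ℝ) :
    Integrable fun x : ℝ => cexp (2 * π * I * (a * x : ℝ)) * hermiteFun k x := by
  have hg : Integrable fun x : ℝ => (hermiteFun k x : ℂ) := by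
    simpa using integrable_ofReal_pow_mul_hermiteFun 0 k
  refine hg.bdd_mul (c := 1) (by fun_prop) (ae_of_all _ fun x => ?_)
  rw [norm_exp]
  simp

theorem integral_cexp_mul_hermiteFun (k : ℕ) (a : ℝ) :
    ∫ x : ℝ, cexp (2 * π * I * (a * x : ℝ)) * hermiteFun k x = I ^ k * hermiteFun k a := by
  have h := congrFun (fourier_hermiteFun k) (-a)
  rw [Real.fourier_real_eq_integral_exp_smul, hermiteFun_neg] at h
  convert h using 1
  · congr with x
    push_cast
    ring_nf
  · push_cast
    rw [← mul_assoc, ← mul_pow]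
    simp

variable {ι : Type*} [Fintype ι]

theorem integrable_prod_cexp_mul_hermiteFun (a : ι → ℝ) (m : ι → ℕ) :
    Integrable fun x : ι → ℝ => ∏ i, cexp (2 * π * I * (a i * x i : ℝ)) * hermiteFun (m i) (x i) :=
  Integrable.fintype_prod fun i => integrable_cexp_mul_hermiteFun (m i) (a i)

theorem integral_prod_cexp_mul_hermiteFun (a : ι → ℝ) (m : ι → ℕ) :
    ∫ x : ι → ℝ, ∏ i, cexp (2 * π * I * (a i * x i : ℝ)) * hermiteFun (m i) (x i) =
      ∏ i, I ^ m i * hermiteFun (m i) (a i) := by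
  rw [integral_fintype_prod_volume_eq_prod
    (fun i x => cexp (2 * π * I * (a i * x : ℝ)) * hermiteFun (m i) x)]
  exact Finset.prod_congr rfl fun i _ => integral_cexp_mul_hermiteFun (m i) (a i)

theorem prod_hermiteFun_comp_perm (σ : Equiv.Perm ι) (a : ι → ℝ) (m : ι → ℕ) :
    ∏ i, hermiteFun (m i) (a (σ⁻¹ i)) =
      Real.exp (-π * ∑ i, a i ^ 2) * ∏ i, aeval (2 * √π * a i) (hermite (m (σ i))) := by
  rw [← Equiv.prod_comp σ]
  simp only [Equiv.Perm.coe_inv, Equiv.symm_apply_apply, hermiteFun, Finset.prod_mul_distrib,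
    Finset.mul_sum, Real.exp_sum]
  ring

theorem Ehat_mul_gaussian_mul_prod_hermite (n : ℕ) (lam x : Fin n → ℝ) (m : Fin n → ℕ) :
    Ehat n lam x * ((Real.exp (-π * ∑ i, x i ^ 2) : ℝ) : ℂ) *
        ((∏ i, (aeval (2 * √π * x i) (hermite (m i)) : ℝ) : ℝ) : ℂ) =
      ∑ σ : alternatingGroup (Fin n), ∏ i,
        cexp (2 * π * I * (lam ((σ : Equiv.Perm (Fin n))⁻¹ i) * x i : ℝ)) *
          hermiteFun (m i) (x i) := by
  simp only [Ehat, hermiteFun, Finset.sum_mul]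
  refine Finset.sum_congr rfl fun σ _ => ?_
  push_cast
  simp only [Finset.mul_sum, Complex.exp_sum, Finset.prod_mul_distrib]
  ring

theorem Ehat_hermite_transform_general (n : ℕ) (lam : Fin n → ℝ) (m : Fin n → ℕ) :
    ∫ x : Fin n → ℝ,
        Ehat n lam x * ((Real.exp (-Real.pi * ∑ i, x i ^ 2) : ℝ) : ℂ) *
          ((∏ i, (Polynomial.aeval (2 * Real.sqrt Real.pi * x i)
            (Polynomial.hermite (m i)) : ℝ) : ℝ) : ℂ) =
      Complex.I ^ (∑ i, m i) * ((Real.exp (-Real.pi * ∑ i, lam i ^ 2) : ℝ) : ℂ) *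
        ∑ σ : alternatingGroup (Fin n),
          ((∏ i, (Polynomial.aeval (2 * Real.sqrt Real.pi * lam i)
            (Polynomial.hermite (m ((σ : Equiv.Perm (Fin n)) i))) : ℝ) : ℝ) : ℂ) := by
  simp_rw [Ehat_mul_gaussian_mul_prod_hermite]
  rw [integral_finsetSum _ fun σ _ => integrable_prod_cexp_mul_hermiteFun _ m]
  simp_rw [integral_prod_cexp_mul_hermiteFun, Finset.prod_mul_distrib, Finset.prod_pow_eq_pow_sum,
    ← Complex.ofReal_prod, prod_hermiteFun_comp_perm]
  simp_rw [Complex.ofReal_mul, mul_assoc, ← Finset.mul_sum]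

/-- Applying the `E`-orbit function transform to a product of Hermite functions gives
the `Aₙ`-symmetrized Hermite polynomial times the Gaussian, with eigenvalue factor
`i^{|m|}`. -/
theorem Ehat_hermite_transform (n : ℕ) (hn : 1 ≤ n) (lam : Fin n → ℝ) (m : Fin n → ℕ) :
    ∫ x : Fin n → ℝ,
        Ehat n lam x * ((Real.exp (-Real.pi * ∑ i, x i ^ 2) : ℝ) : ℂ) *
          ((∏ i, (Polynomial.aeval (2 * Real.sqrt Real.pi * x i)
            (Polynomial.hermite (m i)) : ℝ) : ℝ) : ℂ) =
      Complex.I ^ (∑ i, m i) * ((Real.exp (-Real.pi * ∑ i, lam i ^ 2) : ℝ) : ℂ) *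
        ∑ σ : alternatingGroup (Fin n),
          ((∏ i, (Polynomial.aeval (2 * Real.sqrt Real.pi * lam i)
            (Polynomial.hermite (m ((σ : Equiv.Perm (Fin n)) i))) : ℝ) : ℝ) : ℂ) :=
  Ehat_hermite_transform_general n lam m
end
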